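/- Let (G, φ, β, λ) be a conformal H-minimal Legendrian datum on an open set Ω ⊆ ℝ². Then at every point x ∈ Ω with G(x) ≠ 0: ∇σ·∇β = 4·e^{2λ}/ρ² − (1/4)·ρ⁻⁴·Δ(𝔯⁴). -/

import Mathlib

open MeasureTheory Real Set
noncomputable section

abbrev R2 : Type := EuclideanSpace ℝ (Fin 2)
abbrev R4 : Type := EuclideanSpace ℝ (Fin 4)

/-- Real inner product on ℝ⁴. -/
def rin (u v : R4) : ℝ := inner ℝ u v

/-- Standard complex structure on ℝ⁴ ≅ ℂ². -/
def Jc (v : R4) : R4 := (WithLp.equiv 2 (Fin 4 → ℝ)).symm ![-v 1, v 0, -v 3, v 2]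

/-- Partial derivative in the j-th coordinate direction. -/
def pd {E : Type*} [NormedAddCommGroup E] [NormedSpace ℝ E]
    (j : Fin 2) (f : R2 → E) (x : R2) : E :=
  fderiv ℝ f x (EuclideanSpace.single j 1)

/-- Flat Laplacian acting componentwise. -/
def lap {E : Type*} [NormedAddCommGroup E] [NormedSpace ℝ E]
    (f : R2 → E) (x : R2) : E :=
  pd 0 (pd 0 f) x + pd 1 (pd 1 f) x

lemma rin_expand (u v : R4) : rin u v = u 0 * v 0 + u 1 * v 1 + u 2 * v 2 + u 3 * v 3 := by
  simp [rin, PiLp.inner_apply, Fin.sum_univ_four, mul_comm]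

lemma Jc_0 (v : R4) : Jc v 0 = -v 1 := rfl
lemma Jc_1 (v : R4) : Jc v 1 = v 0 := rfl
lemma Jc_2 (v : R4) : Jc v 2 = -v 3 := rfl
lemma Jc_3 (v : R4) : Jc v 3 = v 2 := rfl

lemma Jc_add (u v : R4) : Jc (u + v) = Jc u + Jc v := by
  ext i; fin_cases i <;> simp [Jc] <;> ring
lemma Jc_smul (c : ℝ) (v : R4) : Jc (c • v) = c • Jc v := by
  ext i; fin_cases i <;> simp [Jc] <;> ring
lemma Jc_Jc (v : R4) : Jc (Jc v) = -v := by
  ext i; fin_cases i <;> simp [Jc]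
/-- `Jc` as a continuous linear map. -/
def JL : R4 →L[ℝ] R4 :=
  LinearMap.toContinuousLinearMap
    { toFun := Jc
      map_add' := Jc_add
      map_smul' := Jc_smul }

lemma JL_apply (v : R4) : JL v = Jc v := rfl

lemma rin_Jc_self (v : R4) : rin v (Jc v) = 0 := by
  simp [rin_expand, Jc_0, Jc_1, Jc_2, Jc_3]; ring
lemma rin_Jc_Jc (u v : R4) : rin (Jc u) (Jc v) = rin u v := by
  simp [rin_expand, Jc_0, Jc_1, Jc_2, Jc_3]; ring
lemma rin_comm (u v : R4) : rin u v = rin v u := real_inner_comm _ _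
lemma rin_add_right (u v w : R4) : rin u (v + w) = rin u v + rin u w := inner_add_right _ _ _
lemma rin_smul_right (u v : R4) (c : ℝ) : rin u (c • v) = c * rin u v := real_inner_smul_right _ _ _
lemma rin_neg_right (u v : R4) : rin u (-v) = -rin u v := inner_neg_right _ _
set_option maxHeartbeats 2000000 in
lemma key_identity (p q g : R4) (e2 : ℝ) (he : e2 ≠ 0)
    (hpq : rin p q = 0) (hpJq : rin p (Jc q) = 0)
    (hp : rin p p = e2) (hq : rin q q = e2) :
    rin g p ^ 2 + rin g q ^ 2 + rin g (Jc p) ^ 2 + rin g (Jc q) ^ 2 = e2 * rin g g := by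
  set M : Matrix (Fin 4) (Fin 4) ℝ :=
    !![p 0, p 1, p 2, p 3; q 0, q 1, q 2, q 3;
       -p 1, p 0, -p 3, p 2; -q 1, q 0, -q 3, q 2] with hM
  set N : Matrix (Fin 4) (Fin 4) ℝ :=
    !![p 0, q 0, -p 1, -q 1; p 1, q 1, p 0, q 0;
       p 2, q 2, -p 3, -q 3; p 3, q 3, p 2, q 2] with hN
  rw [rin_expand] at hpq hp hq
  rw [rin_expand] at hpJq
  simp only [Jc_0, Jc_1, Jc_2, Jc_3] at hpJq
  have hMN : M * N = e2 • (1 : Matrix (Fin 4) (Fin 4) ℝ) := by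
    ext i j
    fin_cases i <;> fin_cases j <;>
      simp [hM, hN, Matrix.mul_apply, Fin.sum_univ_four] <;> linarith
  have h1 : M * (e2⁻¹ • N) = 1 := by
    rw [Matrix.mul_smul, hMN, smul_smul, inv_mul_cancel₀ he, one_smul]
  have h2 : (e2⁻¹ • N) * M = 1 := mul_eq_one_comm.mp h1
  have h3 : N * M = e2 • (1 : Matrix (Fin 4) (Fin 4) ℝ) := by
    have := congrArg (fun A => e2 • A) h2
    simpa [smul_smul, mul_inv_cancel₀ he, Matrix.smul_mul] using this
  have hent : ∀ i j, (N * M) i j = (e2 • (1 : Matrix (Fin 4) (Fin 4) ℝ)) i j := by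
    intro i j; rw [h3]
  have e00 := hent 0 0; have e01 := hent 0 1; have e02 := hent 0 2; have e03 := hent 0 3
  have e11 := hent 1 1; have e12 := hent 1 2; have e13 := hent 1 3
  have e22 := hent 2 2; have e23 := hent 2 3; have e33 := hent 3 3
  simp [hM, hN, Matrix.mul_apply, Fin.sum_univ_four]
    at e00 e01 e02 e03 e11 e12 e13 e22 e23 e33
  rw [rin_expand, rin_expand, rin_expand, rin_expand, rin_expand]
  simp only [Jc_0, Jc_1, Jc_2, Jc_3]
  linear_combination (g 0 * g 0) * e00 + (2 * g 0 * g 1) * e01 + (2 * g 0 * g 2) * e02 +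
    (2 * g 0 * g 3) * e03 + (g 1 * g 1) * e11 + (2 * g 1 * g 2) * e12 + (2 * g 1 * g 3) * e13 +
    (g 2 * g 2) * e22 + (2 * g 2 * g 3) * e23 + (g 3 * g 3) * e33

section Toolkit
variable {f g : R2 → R4} {c d : R2 → ℝ} {x : R2} {j : Fin 2}

lemma pd_hasFDerivAt {E : Type*} [NormedAddCommGroup E] [NormedSpace ℝ E]
    {f : R2 → E} {f' : R2 →L[ℝ] E} (h : HasFDerivAt f f' x) (j : Fin 2) :
    pd j f x = f' (EuclideanSpace.single j 1) := by
  rw [pd, h.fderiv]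

lemma pd_congr {E : Type*} [NormedAddCommGroup E] [NormedSpace ℝ E]
    {f g : R2 → E} (h : f =ᶠ[nhds x] g) (j : Fin 2) : pd j f x = pd j g x := by
  rw [pd, pd, h.fderiv_eq]

lemma pd_add (hc : DifferentiableAt ℝ c x) (hd : DifferentiableAt ℝ d x) :
    pd j (fun y => c y + d y) x = pd j c x + pd j d x := by
  rw [pd, fderiv_fun_add hc hd]; rfl

lemma pd_mul (hc : DifferentiableAt ℝ c x) (hd : DifferentiableAt ℝ d x) :
    pd j (fun y => c y * d y) x = c x * pd j d x + d x * pd j c x := by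
  rw [pd, fderiv_fun_mul hc hd]; rfl

lemma pd_const_mul (hc : DifferentiableAt ℝ c x) (a : ℝ) :
    pd j (fun y => a * c y) x = a * pd j c x := by
  rw [pd, fderiv_const_mul hc a]; rfl

lemma pd_inv (hd : DifferentiableAt ℝ d x) (h0 : d x ≠ 0) :
    pd j (fun y => (d y)⁻¹) x = -(d x ^ 2)⁻¹ * pd j d x := by
  have h := (hasDerivAt_inv h0).comp_hasFDerivAt x hd.hasFDerivAt
  have := pd_hasFDerivAt h j
  simpa [pd, Function.comp_def] using this

lemma pd_inner (hf : DifferentiableAt ℝ f x) (hg : DifferentiableAt ℝ g x) :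
    pd j (fun y => rin (f y) (g y)) x = rin (f x) (pd j g x) + rin (pd j f x) (g x) :=
  fderiv_inner_apply (𝕜 := ℝ) hf hg _

lemma pd_jc (hf : DifferentiableAt ℝ f x) :
    pd j (fun y => Jc (f y)) x = Jc (pd j f x) := by
  have h : HasFDerivAt (fun y => JL (f y)) (JL.comp (fderiv ℝ f x)) x :=
    JL.hasFDerivAt.comp x hf.hasFDerivAt
  exact pd_hasFDerivAt h j

lemma diff_jc (hf : DifferentiableAt ℝ f x) :
    DifferentiableAt ℝ (fun y => Jc (f y)) x :=
  (JL.differentiable.differentiableAt).comp x hf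

end Toolkit


structure HMinimalDatum (Ω : Set R2) (G : R2 → R4) (φ β lam : R2 → ℝ) : Prop where
  isOpen : IsOpen Ω
  smooth_G : ∀ x ∈ Ω, ContDiffAt ℝ (⊤ : ℕ∞) G x
  smooth_φ : ∀ x ∈ Ω, ContDiffAt ℝ (⊤ : ℕ∞) φ x
  smooth_β : ∀ x ∈ Ω, ContDiffAt ℝ (⊤ : ℕ∞) β x
  smooth_lam : ∀ x ∈ Ω, ContDiffAt ℝ (⊤ : ℕ∞) lam x
  conf_orth : ∀ x ∈ Ω, rin (pd 0 G x) (pd 1 G x) = 0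
  conf_norm₁ : ∀ x ∈ Ω, ‖pd 0 G x‖ = Real.exp (lam x)
  conf_norm₂ : ∀ x ∈ Ω, ‖pd 1 G x‖ = Real.exp (lam x)
  lagrangian : ∀ x ∈ Ω, rin (pd 0 G x) (Jc (pd 1 G x)) = 0
  legendrian : ∀ x ∈ Ω, ∀ j : Fin 2, pd j φ x = rin (G x) (Jc (pd j G x))
  harmonic_β : ∀ x ∈ Ω, lap β x = 0
  hminimal : ∀ x ∈ Ω,
    Jc (lap G x) = (2 * pd 0 β x) • pd 0 G x + (2 * pd 1 β x) • pd 1 G x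

/-- The Folland–Korányi gauge composed with the Legendrian immersion. -/
def kGauge (G : R2 → R4) (φ : R2 → ℝ) (x : R2) : ℝ :=
  (‖G x‖ ^ 4 + 4 * φ x ^ 2) ^ ((1:ℝ)/4)

/-- The phase σ = 2φ/ρ². -/
def phase (G : R2 → R4) (φ : R2 → ℝ) (x : R2) : ℝ := 2 * φ x / ‖G x‖ ^ 2

/-- Dirichlet energy density |∇σ|²/(1+σ²)² of arctan σ. -/
def energyDensity (G : R2 → R4) (φ : R2 → ℝ) (x : R2) : ℝ :=
  ((pd 0 (phase G φ) x) ^ 2 + (pd 1 (phase G φ) x) ^ 2) / (1 + (phase G φ x) ^ 2) ^ 2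


/-- The computation (k-6) of the paper in conformal (flat) form: away from zeros of `G`,
`∇σ·∇β = 4e^{2λ}/ρ² − 4⁻¹ρ⁻⁴Δ(𝔯⁴)` where `𝔯⁴ = ρ⁴ + 4φ²`. -/
theorem grad_phase_grad_angle (Ω : Set R2) (G : R2 → R4) (φ β lam : R2 → ℝ)
    (hdat : HMinimalDatum Ω G φ β lam) :
    ∀ x ∈ Ω, G x ≠ 0 →
      pd 0 (phase G φ) x * pd 0 β x + pd 1 (phase G φ) x * pd 1 β x =
        4 * Real.exp (2 * lam x) / ‖G x‖ ^ 2 -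
          (1/4) * (‖G x‖ ^ 4)⁻¹ * lap (fun y => ‖G y‖ ^ 4 + 4 * φ y ^ 2) x := by
  intro x hx hGx
  have hΩ : ∀ᶠ y in nhds x, y ∈ Ω := hdat.isOpen.eventually_mem hx
  have dG : ∀ y ∈ Ω, DifferentiableAt ℝ G y := fun y hy =>
    (hdat.smooth_G y hy).differentiableAt (by simp)
  have dφ : ∀ y ∈ Ω, DifferentiableAt ℝ φ y := fun y hy =>
    (hdat.smooth_φ y hy).differentiableAt (by simp)
  have dpdG : ∀ j : Fin 2, DifferentiableAt ℝ (pd j G) x := by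
    intro j
    have h1 : ContDiffAt ℝ (⊤ : ℕ∞) (fderiv ℝ G) x := (hdat.smooth_G x hx).fderiv_right (by simp)
    have h2 : ContDiffAt ℝ (⊤ : ℕ∞) (fun z => fderiv ℝ G z (EuclideanSpace.single j 1)) x :=
      h1.clm_apply contDiffAt_const
    exact h2.differentiableAt (by simp)
  have dGx := dG x hx
  have dφx := dφ x hx
  -- basic scalars
  have hr : rin (G x) (G x) = ‖G x‖ ^ 2 := real_inner_self_eq_norm_sq _
  have hrpos : 0 < rin (G x) (G x) := by
    rw [hr]; exact pow_pos (norm_pos_iff.mpr hGx) 2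
  have hrne : rin (G x) (G x) ≠ 0 := ne_of_gt hrpos
  have he2 : Real.exp (lam x) ^ 2 = Real.exp (2 * lam x) := by
    rw [sq, ← Real.exp_add, two_mul]
  have hD0 : rin (pd 0 G x) (pd 0 G x) = Real.exp (2 * lam x) := by
    rw [rin, real_inner_self_eq_norm_sq, hdat.conf_norm₁ x hx, he2]
  have hD1 : rin (pd 1 G x) (pd 1 G x) = Real.exp (2 * lam x) := by
    rw [rin, real_inner_self_eq_norm_sq, hdat.conf_norm₂ x hx, he2]
  -- the phase derivative
  have hphase : phase G φ = fun y => (2 * φ y) * (rin (G y) (G y))⁻¹ := by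
    funext y
    rw [phase, div_eq_mul_inv, rin, real_inner_self_eq_norm_sq]
  have dR : DifferentiableAt ℝ (fun y => rin (G y) (G y)) x := dGx.inner ℝ dGx
  have dRinv : DifferentiableAt ℝ (fun y => (rin (G y) (G y))⁻¹) x :=
    ((hasDerivAt_inv hrne).comp_hasFDerivAt x dR.hasFDerivAt).differentiableAt
  have hpdR : ∀ j : Fin 2, pd j (fun y => rin (G y) (G y)) x = 2 * rin (G x) (pd j G x) := by
    intro j
    have h := pd_inner (j := j) dGx dGx
    rw [h, rin_comm (pd j G x) (G x)]
    ring
  have hpdphase : ∀ j : Fin 2, pd j (phase G φ) x =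
      (2 * φ x) * (-((rin (G x) (G x)) ^ 2)⁻¹ * (2 * rin (G x) (pd j G x)))
        + (rin (G x) (G x))⁻¹ * (2 * pd j φ x) := by
    intro j
    have h0 : pd j (phase G φ) x = pd j (fun y => (2 * φ y) * (rin (G y) (G y))⁻¹) x := by
      rw [hphase]
    have h1 : pd j (fun y => (2 * φ y) * (rin (G y) (G y))⁻¹) x =
        (2 * φ x) * pd j (fun y => (rin (G y) (G y))⁻¹) x
          + (rin (G x) (G x))⁻¹ * pd j (fun y => 2 * φ y) x :=
      pd_mul (dφx.const_mul 2) dRinv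
    have h2 : pd j (fun y => (rin (G y) (G y))⁻¹) x =
        -((rin (G x) (G x)) ^ 2)⁻¹ * pd j (fun y => rin (G y) (G y)) x := pd_inv dR hrne
    have h3 : pd j (fun y => 2 * φ y) x = 2 * pd j φ x := pd_const_mul dφx 2
    rw [h0, h1, h2, h3, hpdR j]
  -- second derivatives of the gauge quartic
  have hev : ∀ j : Fin 2,
      (pd j (fun y => rin (G y) (G y) * rin (G y) (G y) + 4 * (φ y * φ y))) =ᶠ[nhds x]
      (fun y => 4 * (rin (G y) (G y) * rin (G y) (pd j G y))
        + 8 * (φ y * rin (G y) (Jc (pd j G y)))) := by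
    intro j
    filter_upwards [hΩ] with y hy
    have dGy := dG y hy
    have dφy := dφ y hy
    have dRy : DifferentiableAt ℝ (fun z => rin (G z) (G z)) y := dGy.inner ℝ dGy
    have h1 : pd j (fun z => rin (G z) (G z) * rin (G z) (G z) + 4 * (φ z * φ z)) y =
        pd j (fun z => rin (G z) (G z) * rin (G z) (G z)) y
          + pd j (fun z => 4 * (φ z * φ z)) y :=
      pd_add (dRy.mul dRy) ((dφy.mul dφy).const_mul 4)
    have h2 : pd j (fun z => rin (G z) (G z) * rin (G z) (G z)) y =
        rin (G y) (G y) * pd j (fun z => rin (G z) (G z)) y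
          + rin (G y) (G y) * pd j (fun z => rin (G z) (G z)) y := pd_mul dRy dRy
    have h3 : pd j (fun z => rin (G z) (G z)) y =
        rin (G y) (pd j G y) + rin (pd j G y) (G y) := pd_inner dGy dGy
    have h4 : pd j (fun z => 4 * (φ z * φ z)) y = 4 * pd j (fun z => φ z * φ z) y :=
      pd_const_mul (dφy.mul dφy) 4
    have h5 : pd j (fun z => φ z * φ z) y = φ y * pd j φ y + φ y * pd j φ y := pd_mul dφy dφy
    have h6 : pd j φ y = rin (G y) (Jc (pd j G y)) := hdat.legendrian y hy j
    rw [h1, h2, h3, h4, h5, h6, rin_comm (pd j G y) (G y)]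
    ring
  have h2d : ∀ j : Fin 2,
      pd j (pd j (fun y => rin (G y) (G y) * rin (G y) (G y) + 4 * (φ y * φ y))) x =
        4 * (rin (G x) (G x) * (rin (G x) (pd j (pd j G) x) + rin (pd j G x) (pd j G x))
              + rin (G x) (pd j G x) * (2 * rin (G x) (pd j G x)))
          + 8 * (φ x * (rin (G x) (Jc (pd j (pd j G) x)) + rin (pd j G x) (Jc (pd j G x)))
              + rin (G x) (Jc (pd j G x)) * pd j φ x) := by
    intro j
    have dpdGx := dpdG j
    have dJ : DifferentiableAt ℝ (fun y => Jc (pd j G y)) x := diff_jc dpdGx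
    have d1 : DifferentiableAt ℝ (fun y => rin (G y) (G y) * rin (G y) (pd j G y)) x :=
      dR.mul (dGx.inner ℝ dpdGx)
    have d2 : DifferentiableAt ℝ (fun y => φ y * rin (G y) (Jc (pd j G y))) x :=
      dφx.mul (dGx.inner ℝ dJ)
    have e0 : pd j (fun y => 4 * (rin (G y) (G y) * rin (G y) (pd j G y))
          + 8 * (φ y * rin (G y) (Jc (pd j G y)))) x =
        pd j (fun y => 4 * (rin (G y) (G y) * rin (G y) (pd j G y))) x
          + pd j (fun y => 8 * (φ y * rin (G y) (Jc (pd j G y)))) x :=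
      pd_add (d1.const_mul 4) (d2.const_mul 8)
    have e1 : pd j (fun y => 4 * (rin (G y) (G y) * rin (G y) (pd j G y))) x =
        4 * pd j (fun y => rin (G y) (G y) * rin (G y) (pd j G y)) x := pd_const_mul d1 4
    have e2 : pd j (fun y => rin (G y) (G y) * rin (G y) (pd j G y)) x =
        rin (G x) (G x) * pd j (fun y => rin (G y) (pd j G y)) x
          + rin (G x) (pd j G x) * pd j (fun y => rin (G y) (G y)) x :=
      pd_mul dR (dGx.inner ℝ dpdGx)
    have e3 : pd j (fun y => rin (G y) (pd j G y)) x =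
        rin (G x) (pd j (pd j G) x) + rin (pd j G x) (pd j G x) := pd_inner dGx dpdGx
    have e4 : pd j (fun y => 8 * (φ y * rin (G y) (Jc (pd j G y)))) x =
        8 * pd j (fun y => φ y * rin (G y) (Jc (pd j G y))) x := pd_const_mul d2 8
    have e5 : pd j (fun y => φ y * rin (G y) (Jc (pd j G y))) x =
        φ x * pd j (fun y => rin (G y) (Jc (pd j G y))) x
          + rin (G x) (Jc (pd j G x)) * pd j φ x := pd_mul dφx (dGx.inner ℝ dJ)
    have e6 : pd j (fun y => rin (G y) (Jc (pd j G y))) x =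
        rin (G x) (pd j (fun y => Jc (pd j G y)) x) + rin (pd j G x) (Jc (pd j G x)) :=
      pd_inner dGx dJ
    have e7 : pd j (fun y => Jc (pd j G y)) x = Jc (pd j (pd j G) x) := pd_jc dpdGx
    rw [pd_congr (hev j) j, e0, e1, e2, e3, e4, e5, e6, e7, hpdR j]
  -- the H-minimality relations
  have hJsum : Jc (pd 0 (pd 0 G) x + pd 1 (pd 1 G) x) =
      (2 * pd 0 β x) • pd 0 G x + (2 * pd 1 β x) • pd 1 G x := hdat.hminimal x hx
  have hgJK : rin (G x) (Jc (pd 0 (pd 0 G) x)) + rin (G x) (Jc (pd 1 (pd 1 G) x)) =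
      2 * pd 0 β x * rin (G x) (pd 0 G x) + 2 * pd 1 β x * rin (G x) (pd 1 G x) := by
    have : rin (G x) (Jc (pd 0 (pd 0 G) x)) + rin (G x) (Jc (pd 1 (pd 1 G) x)) =
        rin (G x) (Jc (pd 0 (pd 0 G) x + pd 1 (pd 1 G) x)) := by
      rw [Jc_add, rin_add_right]
    rw [this, hJsum, rin_add_right, rin_smul_right, rin_smul_right]
  have hgK : rin (G x) (pd 0 (pd 0 G) x) + rin (G x) (pd 1 (pd 1 G) x) =
      -(2 * pd 0 β x * rin (G x) (Jc (pd 0 G x)) + 2 * pd 1 β x * rin (G x) (Jc (pd 1 G x))) := by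
    have h1 : pd 0 (pd 0 G) x + pd 1 (pd 1 G) x =
        -Jc ((2 * pd 0 β x) • pd 0 G x + (2 * pd 1 β x) • pd 1 G x) := by
      rw [← hJsum, Jc_Jc, neg_neg]
    have h2 : rin (G x) (pd 0 (pd 0 G) x) + rin (G x) (pd 1 (pd 1 G) x) =
        rin (G x) (pd 0 (pd 0 G) x + pd 1 (pd 1 G) x) := (rin_add_right _ _ _).symm
    rw [h2, h1, Jc_add, Jc_smul, Jc_smul, rin_neg_right, rin_add_right, rin_smul_right,
      rin_smul_right]
  -- the Parseval identity
  have hkey : rin (G x) (pd 0 G x) ^ 2 + rin (G x) (pd 1 G x) ^ 2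
      + rin (G x) (Jc (pd 0 G x)) ^ 2 + rin (G x) (Jc (pd 1 G x)) ^ 2 =
      Real.exp (2 * lam x) * rin (G x) (G x) :=
    key_identity (pd 0 G x) (pd 1 G x) (G x) (Real.exp (2 * lam x)) (Real.exp_ne_zero _)
      (hdat.conf_orth x hx) (hdat.lagrangian x hx) hD0 hD1
  -- Laplacian of the quartic
  have hlapF : lap (fun y => rin (G y) (G y) * rin (G y) (G y) + 4 * (φ y * φ y)) x =
      16 * Real.exp (2 * lam x) * rin (G x) (G x)
        - 8 * rin (G x) (G x) * (pd 0 β x * rin (G x) (Jc (pd 0 G x))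
            + pd 1 β x * rin (G x) (Jc (pd 1 G x)))
        + 16 * φ x * (pd 0 β x * rin (G x) (pd 0 G x)
            + pd 1 β x * rin (G x) (pd 1 G x)) := by
    have hl : lap (fun y => rin (G y) (G y) * rin (G y) (G y) + 4 * (φ y * φ y)) x =
        pd 0 (pd 0 (fun y => rin (G y) (G y) * rin (G y) (G y) + 4 * (φ y * φ y))) x
          + pd 1 (pd 1 (fun y => rin (G y) (G y) * rin (G y) (G y) + 4 * (φ y * φ y))) x := rfl
    rw [hl, h2d 0, h2d 1, hdat.legendrian x hx 0, hdat.legendrian x hx 1,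
      hD0, hD1, rin_Jc_self, rin_Jc_self]
    linear_combination (4 * rin (G x) (G x)) * hgK + (8 * φ x) * hgJK + 8 * hkey
  -- put everything together
  have hfun : (fun y => ‖G y‖ ^ 4 + 4 * φ y ^ 2) =
      (fun y => rin (G y) (G y) * rin (G y) (G y) + 4 * (φ y * φ y)) := by
    funext y
    have : ‖G y‖ ^ 4 = ‖G y‖ ^ 2 * ‖G y‖ ^ 2 := by ring
    rw [this, ← real_inner_self_eq_norm_sq]
    show rin (G y) (G y) * rin (G y) (G y) + 4 * φ y ^ 2 = _
    ring
  have hnorm2 : ‖G x‖ ^ 2 = rin (G x) (G x) := hr.symm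
  have hnorm4 : ‖G x‖ ^ 4 = rin (G x) (G x) * rin (G x) (G x) := by
    rw [show ‖G x‖ ^ 4 = ‖G x‖ ^ 2 * ‖G x‖ ^ 2 from by ring, hnorm2]
  rw [hfun, hnorm2, hnorm4, hlapF, hpdphase 0, hpdphase 1,
    hdat.legendrian x hx 0, hdat.legendrian x hx 1]
  field_simp
  ring
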